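/- Given a homotopy h for d with d h d = d, set π = 1 - d h - h d. For any degree-0 endomorphism a satisfying d a = 0, π a = 0, a d = 0, a h = 0, the operator h' = h(1 - a π) is again a homotopy for d with d h' d = d, and 1 - d h' - h' d = (1 + d h a) π. -/
import Mathlib


/-- transformation A of the ABC lemma: given a homotopy `h` for
`d` with `d h d = d`, set `π = 1 - d h - h d`.  For any endomorphism `a` with
`d a = 0`, `π a = 0`, `a d = 0`, `a h = 0`, the operator `h' = h (1 - a π)` is
again a homotopy for `d` (`h'² = 0`, `h' d h' = h'`) with `d h' d = d`, and
`1 - d h' - h' d = (1 + d h a) π`. -/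
theorem stmt_4 {R : Type*} [CommRing R] {M : Type*} [AddCommGroup M] [Module R M]
    (d h a : Module.End R M)
    (hd2 : d * d = 0) (hh2 : h * h = 0) (hhdh : h * d * h = h) (hdhd : d * h * d = d)
    (ha1 : d * a = 0)
    (ha2 : (1 - d * h - h * d) * a = 0)
    (ha3 : a * d = 0) (ha4 : a * h = 0) :
    (h * (1 - a * (1 - d * h - h * d))) * (h * (1 - a * (1 - d * h - h * d))) = 0 ∧
    (h * (1 - a * (1 - d * h - h * d))) * d * (h * (1 - a * (1 - d * h - h * d)))
      = h * (1 - a * (1 - d * h - h * d)) ∧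
    d * (h * (1 - a * (1 - d * h - h * d))) * d = d ∧
    1 - d * (h * (1 - a * (1 - d * h - h * d)))
      - (h * (1 - a * (1 - d * h - h * d))) * d
      = (1 + d * h * a) * (1 - d * h - h * d) := by

  set P : Module.End R M := 1 - d * h - h * d with hPdef
  have hP : h * P = 0 := by
    have : h * P = h - h * d * h - h * h * d := by
      rw [hPdef]; noncomm_ring
    rw [this, hhdh, hh2]; noncomm_ring
  have Ph : P * h = 0 := by
    have : P * h = h - d * (h * h) - h * d * h := by rw [hPdef]; noncomm_ring
    rw [this, hh2, hhdh]; noncomm_ring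
  have dP : d * P = 0 := by
    have : d * P = d - d * d * h - d * h * d := by rw [hPdef]; noncomm_ring
    rw [this, hd2, hdhd]; noncomm_ring
  have Pd : P * d = 0 := by
    have : P * d = d - d * h * d - h * (d * d) := by rw [hPdef]; noncomm_ring
    rw [this, hd2, hdhd]; noncomm_ring
  refine ⟨?_, ?_, ?_, ?_⟩
  · have : h * (1 - a * P) * (h * (1 - a * P))
        = h * h * (1 - a * P) - h * a * (P * h) * (1 - a * P) := by noncomm_ring
    rw [this, hh2, Ph]; noncomm_ring
  · have : h * (1 - a * P) * d * (h * (1 - a * P))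
        = h * d * h * (1 - a * P) - h * a * (P * d) * (h * (1 - a * P)) := by noncomm_ring
    rw [this, hhdh, Pd]; noncomm_ring
  · have : d * (h * (1 - a * P)) * d
        = d * h * d - d * h * a * (P * d) := by noncomm_ring
    rw [this, hdhd, Pd]; noncomm_ring
  · have : 1 - d * (h * (1 - a * P)) - h * (1 - a * P) * d
        = P + d * h * a * P + h * a * (P * d) := by rw [hPdef]; noncomm_ring
    rw [this, Pd]; noncomm_ring
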